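/- Let H be a finite index set equipped with a total order ≺, and let G be a complex matrix of size |H| that is strictly lower-triangular with respect to ≺, i.e. G_{ij} = 0 whenever i ⪯ j. Let (v_i(w))_{i∈H} be the unique family of power series with zero constant term satisfying v_i(w) = w_i ∏_{j∈H} (1 − v_j(w))^{G_{ij}}. Then for every ν ∈ ℂ^H, ∏_{i∈H} (1 − v_i(w))^{ν_i − 1} = K^ν_{I,G}(w) as formal power series. -/

import Mathlib

noncomputable def binomC (a : ℂ) (b : ℕ) : ℂ :=
  (∏ j ∈ Finset.range b, (a - (j : ℂ))) / (Nat.factorial b : ℂ)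

noncomputable def cpow {σ : Type*} (f : MvPowerSeries σ ℂ) (α : ℂ) : MvPowerSeries σ ℂ :=
  fun N => ∑ k ∈ Finset.range (N.sum (fun _ e => e) + 1),
    binomC α k * MvPowerSeries.coeff N ((f - 1) ^ k)

/-- `P_i(D,G;ν,N) = -Σ_j ν_j (D⁻¹)_{ji} - Σ_j N_j (G D⁻¹)_{ji}`. -/
noncomputable def Pfin {H : Type*} [Fintype H] [DecidableEq H]
    (D G : Matrix H H ℂ) (ν : H → ℂ) (N : H →₀ ℕ) (i : H) : ℂ :=
  -(∑ j, ν j * D⁻¹ j i) - ∑ j, (N j : ℂ) * (G * D⁻¹) j i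

/-- The power series `K^ν_{D,G}(w) = Σ_N (∏_{i∈H(N)} binom(P_i+N_i, N_i)) w^N`. -/
noncomputable def Kfin {H : Type*} [Fintype H] [DecidableEq H]
    (D G : Matrix H H ℂ) (ν : H → ℂ) : MvPowerSeries H ℂ :=
  fun N => ∏ i ∈ N.support, binomC (Pfin D G ν N i + (N i : ℂ)) (N i)

/-- `F_{ij}(D,G;ν,N) = δ_{ij} P_j + (G D⁻¹)_{ij} N_j`. -/
noncomputable def Ffin {H : Type*} [Fintype H] [DecidableEq H]
    (D G : Matrix H H ℂ) (ν : H → ℂ) (N : H →₀ ℕ) (i j : H) : ℂ :=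
  (if i = j then Pfin D G ν N j else 0) + (G * D⁻¹) i j * (N j : ℂ)

/-- The power series
`R^ν_{D,G}(w) = Σ_N (det_{H(N)} F) (∏_{i∈H(N)} (1/N_i) binom(P_i+N_i-1, N_i-1)) w^N`. -/
noncomputable def Rfin {H : Type*} [Fintype H] [DecidableEq H]
    (D G : Matrix H H ℂ) (ν : H → ℂ) : MvPowerSeries H ℂ :=
  fun N =>
    (Matrix.det (Matrix.of fun i j : N.support => Ffin D G ν N i j)) *
      ∏ i ∈ N.support, (1 / (N i : ℂ)) * binomC (Pfin D G ν N i + (N i : ℂ) - 1) (N i - 1)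

/-!
Induct on the largest index `a` with `ν_a ≠ 1`. Expanding `(1 - v_a)^{ν_a - 1}` binomially and
substituting `v_a = w_a ∏_j (1 - v_j)^{G_{aj}}`, the `m`-th term becomes
`(-1)^m binom(ν_a - 1, m) w_a^m ∏_j (1 - v_j)^{ν^{(m)}_j - 1}`, where `ν^{(m)}` is `ν + m G_{a·}`
off `a` and `1` at `a`. As `G` is strictly lower triangular, `ν^{(m)}` is `1` from `a` upwards, so
by induction that product is `K^{ν^{(m)}}`. What remains is a coefficient identity: the factor of
`K^ν_N` at the largest index `j` of the support of `N` is `binom(-ν_j + N_j, N_j)`, which vanishes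
when `ν_j = 1`; so only the term `m = N_a` survives, and it equals `K^ν_N` by the reflection
`binom(-ν + n, n) = (-1)^n binom(ν - 1, n)`.
-/

open MvPowerSeries Finset

lemma binomC_eq_choose (a : ℂ) (b : ℕ) : binomC a b = Ring.choose a b := by
  rw [Ring.choose_eq_smul, ← Polynomial.aeval_eq_smeval, ← Polynomial.eval_map_algebraMap,
    descPochhammer_map, descPochhammer_eval_eq_prod_range, binomC, smul_eq_mul, div_eq_inv_mul]

lemma binomC_zero_right (a : ℂ) : binomC a 0 = 1 := by simp [binomC]

lemma binomC_neg_add_self (ν : ℂ) (n : ℕ) :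
    binomC (-ν + n) n = (-1) ^ n * binomC (ν - 1) n := by
  have h := Ring.choose_neg (ν - n) n
  rw [neg_sub, sub_add_cancel, Units.smul_def, Int.coe_negOnePow_natCast, zsmul_eq_mul] at h
  rw [binomC_eq_choose, binomC_eq_choose, neg_add_eq_sub, h]
  push_cast; rfl

section BinomialPower

variable {σ : Type*}

lemma coeff_pow_eq_zero_of_degree_lt {R : Type*} [CommSemiring R] {g : MvPowerSeries σ R}
    (hg : constantCoeff g = 0) {k : ℕ} {N : σ →₀ ℕ} (h : N.degree < k) :
    coeff N (g ^ k) = 0 :=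
  coeff_of_lt_order <| (Nat.cast_lt.mpr h).trans_le (le_order_pow_of_constantCoeff_eq_zero k hg)

lemma coeff_cpow (f : MvPowerSeries σ ℂ) (α : ℂ) (N : σ →₀ ℕ) :
    coeff N (cpow f α) = ∑ k ∈ range (N.degree + 1), binomC α k * coeff N ((f - 1) ^ k) :=
  rfl

lemma cpow_eq_subst {f : MvPowerSeries σ ℂ} (hf : constantCoeff f = 1) (α : ℂ) :
    cpow f α = (PowerSeries.binomialSeries ℂ α).subst (f - 1) := by
  have hf' : constantCoeff (f - 1) = 0 := by rw [map_sub, hf, map_one, sub_self]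
  ext N
  rw [coeff_cpow, PowerSeries.coeff_subst (PowerSeries.HasSubst.of_constantCoeff_zero hf'),
    finsum_eq_sum_of_support_subset (s := range (N.degree + 1))]
  · simp [binomC_eq_choose]
  · intro k hk
    by_contra hk'
    rw [coe_range, Set.mem_Iio, not_lt] at hk'
    exact hk (by dsimp only; rw [coeff_pow_eq_zero_of_degree_lt hf' (by omega), smul_zero])

lemma cpow_add {f : MvPowerSeries σ ℂ} (hf : constantCoeff f = 1) (α β : ℂ) :
    cpow f (α + β) = cpow f α * cpow f β := by
  have hf' : constantCoeff (f - 1) = 0 := by rw [map_sub, hf, map_one, sub_self]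
  simp only [cpow_eq_subst hf, PowerSeries.binomialSeries_add,
    PowerSeries.subst_mul (PowerSeries.HasSubst.of_constantCoeff_zero hf')]

lemma cpow_zero (f : MvPowerSeries σ ℂ) : cpow f 0 = 1 := by
  ext N
  rw [coeff_cpow, sum_eq_single 0 (fun k _ hk => by rw [binomC_eq_choose, Ring.choose_zero_pos ℂ
    (Nat.pos_of_ne_zero hk), zero_mul]) (by simp), binomC_zero_right, one_mul, pow_zero]

lemma cpow_natCast_mul {f : MvPowerSeries σ ℂ} (hf : constantCoeff f = 1) (m : ℕ) (α : ℂ) :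
    cpow f (m * α) = cpow f α ^ m := by
  induction m with
  | zero => simp [cpow_zero]
  | succ m ih => rw [Nat.cast_succ, add_one_mul, cpow_add hf, ih, pow_succ]

lemma prod_cpow_add {ι : Type*} {s : Finset ι} {f : ι → MvPowerSeries σ ℂ}
    (hf : ∀ i, constantCoeff (f i) = 1) (α β : ι → ℂ) :
    ∏ i ∈ s, cpow (f i) (α i + β i) = (∏ i ∈ s, cpow (f i) (α i)) * ∏ i ∈ s, cpow (f i) (β i) := by
  simp only [cpow_add (hf _), prod_mul_distrib]

lemma coeff_mul_congr_left {R : Type*} [CommSemiring R] {φ ψ : MvPowerSeries σ R}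
    (B : MvPowerSeries σ R) {N : σ →₀ ℕ} (h : ∀ d ≤ N, coeff d φ = coeff d ψ) :
    coeff N (φ * B) = coeff N (ψ * B) := by
  classical
  simp only [coeff_mul]
  exact sum_congr rfl fun p hp => by
    rw [h p.1 (mem_antidiagonal.mp hp ▸ le_self_add)]

lemma coeff_cpow_of_degree_lt {f : MvPowerSeries σ ℂ} (hf : constantCoeff f = 1) (α : ℂ)
    {N : σ →₀ ℕ} {D : ℕ} (hD : N.degree < D) :
    coeff N (cpow f α) = ∑ k ∈ range D, binomC α k * coeff N ((f - 1) ^ k) := by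
  have hf' : constantCoeff (f - 1) = 0 := by rw [map_sub, hf, map_one, sub_self]
  refine sum_subset (range_subset_range.mpr hD) fun k _ hk => ?_
  rw [coeff_pow_eq_zero_of_degree_lt hf' (by simpa using hk), mul_zero]

lemma coeff_cpow_mul {f : MvPowerSeries σ ℂ} (hf : constantCoeff f = 1) (α : ℂ)
    (B : MvPowerSeries σ ℂ) (N : σ →₀ ℕ) :
    coeff N (cpow f α * B) =
      ∑ k ∈ range (N.degree + 1), binomC α k * coeff N ((f - 1) ^ k * B) := by
  rw [coeff_mul_congr_left B (ψ := ∑ k ∈ range (N.degree + 1), binomC α k • (f - 1) ^ k)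
    fun d hd => ?_]
  · simp only [sum_mul, map_sum, smul_mul_assoc, coeff_smul]
  · rw [coeff_cpow_of_degree_lt hf α (Nat.lt_succ_of_le (Finsupp.degree_mono hd))]
    simp only [map_sum, coeff_smul]

end BinomialPower

section Exponents

variable {H : Type*} [LinearOrder H]

lemma exists_ge_ne_zero_and_forall_gt_eq_zero {N : H →₀ ℕ} {j : H} (hj : N j ≠ 0) :
    ∃ j₁, j ≤ j₁ ∧ N j₁ ≠ 0 ∧ ∀ k, j₁ < k → N k = 0 := by
  have hne : N.support.Nonempty := ⟨j, Finsupp.mem_support_iff.mpr hj⟩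
  refine ⟨N.support.max' hne, N.support.le_max' j (Finsupp.mem_support_iff.mpr hj),
    Finsupp.mem_support_iff.mp (N.support.max'_mem hne), fun k hk => ?_⟩
  by_contra hNk
  exact (N.support.le_max' k (Finsupp.mem_support_iff.mpr hNk)).not_gt hk

def exponentShift (G : Matrix H H ℂ) (ν : H → ℂ) (a : H) (m : ℕ) : H → ℂ :=
  Function.update (fun j => ν j + m * G a j) a 1

lemma sub_one_eq_single_add_exponentShift_zero (G : Matrix H H ℂ) (ν : H → ℂ) (a i : H) :
    ν i - 1 = (Pi.single a (ν a - 1) : H → ℂ) i + (exponentShift G ν a 0 i - 1) := by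
  rcases eq_or_ne i a with rfl | hi
  · simp [exponentShift]
  · simp [exponentShift, hi]

lemma exponentShift_sub_one {G : Matrix H H ℂ} (ν : H → ℂ) {a : H} (hGa : G a a = 0) (m : ℕ)
    (i : H) : exponentShift G ν a m i - 1 = m * G a i + (exponentShift G ν a 0 i - 1) := by
  rcases eq_or_ne i a with rfl | hi
  · simp [exponentShift, hGa]
  · simp only [exponentShift, Function.update_of_ne hi]
    ring

variable [Fintype H]

lemma Pfin_one (G : Matrix H H ℂ) (ν : H → ℂ) (N : H →₀ ℕ) (i : H) :
    Pfin 1 G ν N i = -ν i - ∑ j, (N j : ℂ) * G j i := by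
  simp [Pfin, Matrix.one_apply]

lemma coeff_Kfin_one (G : Matrix H H ℂ) (ν : H → ℂ) (N : H →₀ ℕ) :
    coeff N (Kfin 1 G ν) = N.prod fun i n => binomC (Pfin 1 G ν N i + n) n :=
  rfl

lemma sum_natCast_mul_eq_zero_of_forall_gt {G : Matrix H H ℂ}
    (hG : ∀ i j : H, i ≤ j → G i j = 0) {N : H →₀ ℕ} {j : H} (hN : ∀ k, j < k → N k = 0) :
    ∑ k, (N k : ℂ) * G k j = 0 :=
  sum_eq_zero fun k _ => by
    rcases le_or_gt k j with hk | hk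
    · rw [hG k j hk, mul_zero]
    · rw [hN k hk, Nat.cast_zero, zero_mul]

lemma coeff_Kfin_one_eq_zero {G : Matrix H H ℂ} (hG : ∀ i j : H, i ≤ j → G i j = 0)
    {ν : H → ℂ} {N : H →₀ ℕ} {j : H} (hj : N j ≠ 0) (hN : ∀ k, j < k → N k = 0)
    (hν : ν j = 1) : coeff N (Kfin 1 G ν) = 0 := by
  refine prod_eq_zero (Finsupp.mem_support_iff.mpr hj) ?_
  rw [Pfin_one, sum_natCast_mul_eq_zero_of_forall_gt hG hN, sub_zero, hν, binomC_neg_add_self,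
    sub_self, binomC_eq_choose, Ring.choose_zero_pos ℂ (Nat.pos_of_ne_zero hj), mul_zero]

lemma Kfin_one_eq_one {G : Matrix H H ℂ} (hG : ∀ i j : H, i ≤ j → G i j = 0) {ν : H → ℂ}
    (hν : ∀ j, ν j = 1) : Kfin 1 G ν = 1 := by
  ext N
  rw [coeff_one]
  split_ifs with hN
  · simp [hN, coeff_Kfin_one]
  · obtain ⟨j, hj⟩ := Finsupp.ne_iff.mp hN
    obtain ⟨j₁, -, hj₁, hN₁⟩ := exists_ge_ne_zero_and_forall_gt_eq_zero hj
    exact coeff_Kfin_one_eq_zero hG hj₁ hN₁ (hν j₁)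

lemma Pfin_one_exponentShift (G : Matrix H H ℂ) (ν : H → ℂ) (N : H →₀ ℕ) {a j : H} (hj : j ≠ a)
    (m : ℕ) : Pfin 1 G (exponentShift G ν a m) N j = Pfin 1 G ν (N + Finsupp.single a m) j := by
  simp only [Pfin_one, exponentShift, Function.update_of_ne hj, Finsupp.add_apply,
    Finsupp.single_apply, Nat.cast_add, add_mul, sum_add_distrib, Nat.cast_ite, Nat.cast_zero,
    ite_mul, zero_mul, sum_ite_eq, mem_univ, if_true]
  ring

lemma coeff_Kfin_one_eq_choose_mul_exponentShift {G : Matrix H H ℂ}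
    (hG : ∀ i j : H, i ≤ j → G i j = 0) (ν : H → ℂ) {a : H} {N : H →₀ ℕ}
    (hN : ∀ j, a < j → N j = 0) :
    coeff N (Kfin 1 G ν) = binomC (ν a - 1) (N a) *
      ((-1) ^ N a * coeff (N.erase a) (Kfin 1 G (exponentShift G ν a (N a)))) := by
  have hrest : ∀ j ∈ (N.erase a).support,
      Pfin 1 G (exponentShift G ν a (N a)) (N.erase a) j = Pfin 1 G ν N j := fun j hj => by
    rw [Pfin_one_exponentShift _ _ _ (Finsupp.mem_support_iff.mp hj <| by simp [·]),
      Finsupp.erase_add_single]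
  rw [coeff_Kfin_one, coeff_Kfin_one, ← Finsupp.mul_prod_erase' N a _ (by simp [binomC]),
    Pfin_one, sum_natCast_mul_eq_zero_of_forall_gt hG hN, sub_zero, binomC_neg_add_self,
    Finsupp.prod_congr (g2 := fun j (n : ℕ) => binomC (Pfin 1 G ν N j + n) n)
      (g1 := fun j (n : ℕ) => binomC (Pfin 1 G (exponentShift G ν a (N a)) (N.erase a) j + n) n)
      fun j hj => by rw [hrest j hj]]
  ring

lemma sum_choose_mul_coeff_Kfin_exponentShift {G : Matrix H H ℂ}
    (hG : ∀ i j : H, i ≤ j → G i j = 0) {ν : H → ℂ} {a : H} (hν : ∀ j, a < j → ν j = 1)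
    (N : H →₀ ℕ) :
    ∑ m ∈ range (N a + 1), binomC (ν a - 1) m *
      ((-1) ^ m * coeff (N - Finsupp.single a m) (Kfin 1 G (exponentShift G ν a m))) =
      coeff N (Kfin 1 G ν) := by
  by_cases hN : ∀ j, a < j → N j = 0
  · have hN' : N - Finsupp.single a (N a) = N.erase a := by
      simpa only [Finsupp.erase_add_single] using
        add_tsub_cancel_right (N.erase a) (Finsupp.single a (N a))
    rw [coeff_Kfin_one_eq_choose_mul_exponentShift hG ν hN, ← hN']
    refine sum_eq_single_of_mem (N a) (self_mem_range_succ _) fun m hm hne => ?_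
    have hm : m < N a := lt_of_le_of_ne (mem_range_succ_iff.mp hm) hne
    rw [coeff_Kfin_one_eq_zero hG (j := a), mul_zero, mul_zero]
    · rw [Finsupp.tsub_apply, Finsupp.single_eq_same]
      omega
    · intro k hk
      simp [hN k hk]
    · simp [exponentShift]
  · push Not at hN
    obtain ⟨j, haj, hj⟩ := hN
    obtain ⟨j₁, hjj₁, hj₁, hN₁⟩ := exists_ge_ne_zero_and_forall_gt_eq_zero hj
    have ha : a < j₁ := haj.trans_le hjj₁
    rw [coeff_Kfin_one_eq_zero hG hj₁ hN₁ (hν j₁ ha)]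
    refine sum_eq_zero fun m _ => ?_
    rw [coeff_Kfin_one_eq_zero hG (j := j₁), mul_zero, mul_zero]
    · simpa [Finsupp.single_eq_of_ne ha.ne'] using hj₁
    · intro k hk
      simp [hN₁ k hk]
    · simp [exponentShift, Function.update_of_ne ha.ne', hν j₁ ha, hG a j₁ ha.le]

end Exponents

section Inversion

variable {H : Type*} [Fintype H] [LinearOrder H]

lemma prod_cpow_eq_Kfin_of_exponentShift {G : Matrix H H ℂ} (hG : ∀ i j : H, i ≤ j → G i j = 0)
    {v : H → MvPowerSeries H ℂ} (hv0 : ∀ i, constantCoeff (v i) = 0)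
    (hv : ∀ i, v i = X i * ∏ j, cpow (1 - v j) (G i j)) {ν : H → ℂ} {a : H}
    (hν : ∀ j, a < j → ν j = 1)
    (ih : ∀ m : ℕ, ∏ i, cpow (1 - v i) (exponentShift G ν a m i - 1) =
      Kfin 1 G (exponentShift G ν a m)) :
    ∏ i, cpow (1 - v i) (ν i - 1) = Kfin 1 G ν := by
  have hone : ∀ i, constantCoeff (1 - v i) = 1 := fun i => by
    rw [map_sub, map_one, hv0, sub_zero]
  set B := ∏ i, cpow (1 - v i) (exponentShift G ν a 0 i - 1)
  have hsplit : ∏ i, cpow (1 - v i) (ν i - 1) = cpow (1 - v a) (ν a - 1) * B := by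
    rw [prod_congr rfl fun i _ =>
        congrArg (cpow (1 - v i)) (sub_one_eq_single_add_exponentShift_zero G ν a i),
      prod_cpow_add hone,
      Fintype.prod_eq_single a fun i hi => by rw [Pi.single_eq_of_ne hi, cpow_zero],
      Pi.single_eq_same]
  have hterm : ∀ m : ℕ, (1 - v a - 1) ^ m * B =
      C ((-1) ^ m) * (X a ^ m * Kfin 1 G (exponentShift G ν a m)) := by
    intro m
    rw [← ih m, prod_congr rfl fun i _ =>
        congrArg (cpow (1 - v i)) (exponentShift_sub_one ν (hG a a le_rfl) m i), prod_cpow_add hone,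
      sub_sub_cancel_left, hv a, neg_pow, mul_pow, ← prod_pow]
    simp only [cpow_natCast_mul (hone _), map_pow, map_neg, map_one]
    ring
  ext N
  rw [hsplit, coeff_cpow_mul (hone a), ← sum_choose_mul_coeff_Kfin_exponentShift hG hν N]
  simp only [hterm, coeff_C_mul, X_pow_eq, coeff_monomial_mul, one_mul]
  refine (sum_subset (range_subset_range.mpr (by simpa using Finsupp.le_degree a N))
    fun m _ hm => ?_).symm.trans (sum_congr rfl fun m hm => ?_)
  · rw [if_neg (by simpa [Finsupp.single_le_iff] using hm), mul_zero, mul_zero]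
  · rw [if_pos (Finsupp.single_le_iff.mpr (mem_range_succ_iff.mp hm))]

lemma prod_cpow_eq_Kfin_of_isLowerSet {G : Matrix H H ℂ} (hG : ∀ i j : H, i ≤ j → G i j = 0)
    {v : H → MvPowerSeries H ℂ} (hv0 : ∀ i, constantCoeff (v i) = 0)
    (hv : ∀ i, v i = X i * ∏ j, cpow (1 - v j) (G i j)) {s : Finset H}
    (hs : IsLowerSet (s : Set H)) {ν : H → ℂ} (hν : ∀ j ∉ s, ν j = 1) :
    ∏ i, cpow (1 - v i) (ν i - 1) = Kfin 1 G ν := by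
  induction s using Finset.induction_on_max generalizing ν with
  | empty =>
    have hν : ∀ j, ν j = 1 := fun j => hν j (notMem_empty j)
    simp [hν, cpow_zero, Kfin_one_eq_one hG hν]
  | insert a s hlt ih =>
    have hs' : IsLowerSet (s : Set H) := fun x y hyx hx =>
      (mem_insert.mp (hs hyx (mem_insert_of_mem hx))).resolve_left
        (by rintro rfl; exact (hlt x hx).not_ge hyx)
    have hgt : ∀ j ∉ insert a s, a < j := fun j hj =>
      lt_of_not_ge fun hja => hj (hs hja (mem_insert_self a s))
    refine prod_cpow_eq_Kfin_of_exponentShift hG hv0 hv (a := a)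
      (fun j haj => hν j fun hj => ?_) fun m => ih hs' fun j hj => ?_
    · rcases mem_insert.mp hj with rfl | hj
      · exact haj.false
      · exact (haj.trans (hlt j hj)).false
    · rcases eq_or_ne j a with rfl | hja
      · exact Function.update_self ..
      · have hj' : j ∉ insert a s := by simp [hja, hj]
        simp [exponentShift, hja, hν j hj', hG a j (hgt j hj').le]

end Inversion

/-- If `G` is strictly lower-triangular with respect to a total order on
`H` (`G_{ij} = 0` for `i ⪯ j`), and `(v_i)` is the unique family with zero constant terms
satisfying `v_i = w_i ∏_j (1-v_j)^{G_{ij}}`, then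
`∏_i (1-v_i)^{ν_i - 1} = K^ν_{I,G}(w)`. -/
theorem statement9 {H : Type*} [Fintype H] [LinearOrder H]
    (G : Matrix H H ℂ) (hG : ∀ i j : H, i ≤ j → G i j = 0)
    (v : H → MvPowerSeries H ℂ)
    (hv0 : ∀ i, MvPowerSeries.constantCoeff (v i) = 0)
    (hv : ∀ i, v i = MvPowerSeries.X i * ∏ j, cpow (1 - v j) (G i j))
    (ν : H → ℂ) :
    (∏ i, cpow (1 - v i) (ν i - 1)) = Kfin 1 G ν :=
  prod_cpow_eq_Kfin_of_isLowerSet hG hv0 hv (s := univ)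
    (by rw [coe_univ]; exact isLowerSet_univ) (by simp)
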